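/- Let q be a positive integer, A a set of positive integers, and I the complement of A in the positive integers. Let s and t be natural numbers with t ≤ s, let i_1,…,i_t be elements of A, let α be a partition all of whose parts belong to I, and set n = i_1 + ⋯ + i_t + |α|. Then, as real numbers, ⌊i_1/q⌋ + ⋯ + ⌊i_t/q⌋ + π_q(α) ≥ ρ_q(I)·(n − (q−1)·s). -/

import Mathlib

open Classical in
/-- `ρ_q(I)`: the infimum of `⌊i/q⌋/i` over `i ∈ I` if `I` is nonempty,
and `1/q` if `I` is empty. -/
noncomputable def rho (q : ℕ) (I : Set ℕ) : ℝ :=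
  if I.Nonempty then sInf ((fun i : ℕ => ((i / q : ℕ) : ℝ) / (i : ℝ)) '' I) else 1 / q

lemma rho_nonneg (q : ℕ) (I : Set ℕ) : 0 ≤ rho q I := by
  unfold rho
  split
  · apply Real.sInf_nonneg
    rintro x ⟨y, -, rfl⟩
    positivity
  · positivity

lemma rho_bdd (q : ℕ) (I : Set ℕ) :
    BddBelow ((fun i : ℕ => ((i / q : ℕ) : ℝ) / (i : ℝ)) '' I) := by
  refine ⟨0, ?_⟩
  rintro x ⟨y, -, rfl⟩
  positivity

lemma rho_le_one_div (q : ℕ) (hq : 0 < q) (I : Set ℕ) (hI : ∀ x ∈ I, 0 < x) :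
    rho q I ≤ 1 / q := by
  unfold rho
  split
  · rename_i h
    obtain ⟨x, hx⟩ := h
    refine le_trans (csInf_le (rho_bdd q I) ⟨x, hx, rfl⟩) ?_
    have hx0 : (0:ℝ) < x := by exact_mod_cast hI x hx
    rw [div_le_div_iff₀ hx0 (by exact_mod_cast hq)]
    have : (x / q) * q ≤ x := Nat.div_mul_le_self x q
    calc ((x / q : ℕ) : ℝ) * q ≤ (x : ℝ) := by exact_mod_cast this
      _ = 1 * x := (one_mul _).symm
  · exact le_refl _

lemma rho_mul_le (q : ℕ) (I : Set ℕ) (hI : ∀ x ∈ I, 0 < x) {x : ℕ} (hx : x ∈ I) :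
    rho q I * x ≤ ((x / q : ℕ) : ℝ) := by
  have hx0 : (0:ℝ) < x := by exact_mod_cast hI x hx
  have h1 : rho q I ≤ ((x / q : ℕ) : ℝ) / x := by
    unfold rho
    rw [if_pos ⟨x, hx⟩]
    exact csInf_le (rho_bdd q I) ⟨x, hx, rfl⟩
  calc rho q I * x ≤ (((x / q : ℕ) : ℝ) / x) * x := by
        exact mul_le_mul_of_nonneg_right h1 hx0.le
    _ = ((x / q : ℕ) : ℝ) := by field_simp

lemma list_sum_bound (q : ℕ) (I : Set ℕ) (hI : ∀ x ∈ I, 0 < x) :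
    ∀ l : List ℕ, (∀ x ∈ l, x ∈ I) →
      rho q I * (l.sum : ℝ) ≤ ((l.map (· / q)).sum : ℝ) := by
  intro l
  induction l with
  | nil => simp
  | cons a l ih =>
    intro h
    have ha := rho_mul_le q I hI (h a (by simp))
    have hl := ih (fun x hx => h x (List.mem_cons_of_mem a hx))
    simp only [List.sum_cons, List.map_cons, Nat.cast_add]
    calc rho q I * ((a : ℝ) + (l.sum : ℝ))
        = rho q I * a + rho q I * l.sum := by ring
      _ ≤ ((a / q : ℕ) : ℝ) + ((l.map (· / q)).sum : ℝ) := add_le_add ha hl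

/-- with `A` a set of positive integers, `I` its complement inside
the positive integers, `t ≤ s`, `i_1,…,i_t ∈ A`, `α` a partition with all parts
in `I`, and `n = i_1 + ⋯ + i_t + |α|`, one has
`⌊i_1/q⌋ + ⋯ + ⌊i_t/q⌋ + π_q(α) ≥ ρ_q(I)·(n − (q−1)·s)` as real numbers. -/
theorem stmt_14 (q : ℕ) (hq : 0 < q) (A : Set ℕ) (hA : ∀ a ∈ A, 0 < a)
    (I : Set ℕ) (hIdef : I = {i : ℕ | 0 < i ∧ i ∉ A})
    (s t : ℕ) (hts : t ≤ s) (i : Fin t → ℕ) (hiA : ∀ j, i j ∈ A)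
    (α : List ℕ) (hsort : α.Pairwise (· ≥ ·)) (hmem : ∀ x ∈ α, x ∈ I)
    (n : ℕ) (hn : n = (∑ j, i j) + α.sum) :
    rho q I * ((n : ℝ) - ((q : ℝ) - 1) * (s : ℝ)) ≤
      (((∑ j, i j / q) + (α.map (· / q)).sum : ℕ) : ℝ) := by
  have hIpos : ∀ x ∈ I, 0 < x := by
    intro x hx; rw [hIdef] at hx; exact hx.1
  set ρ := rho q I with hρ
  have hρ0 : 0 ≤ ρ := rho_nonneg q I
  have hρq : ρ ≤ 1 / q := rho_le_one_div q hq I hIpos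
  -- per-element bound for elements of A
  have hAbd : ∀ j : Fin t, ρ * ((i j : ℝ) - ((q : ℝ) - 1)) ≤ (((i j) / q : ℕ) : ℝ) := by
    intro j
    set a := i j
    by_cases hc : (a : ℝ) - ((q : ℝ) - 1) ≤ 0
    · calc ρ * ((a : ℝ) - ((q : ℝ) - 1)) ≤ 0 := mul_nonpos_of_nonneg_of_nonpos hρ0 hc
        _ ≤ _ := by positivity
    · push_neg at hc
      have hdiv : (a : ℝ) - ((q : ℝ) - 1) ≤ ((a / q : ℕ) : ℝ) * q := by
        have h1 : a < q * (a / q) + q := by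
          conv_lhs => rw [← Nat.div_add_mod a q]
          exact Nat.add_lt_add_left (Nat.mod_lt a hq) _
        have h2 : (a : ℝ) + 1 ≤ (q : ℝ) * ((a / q : ℕ) : ℝ) + q := by exact_mod_cast h1
        rw [mul_comm]; linarith [h2]
      calc ρ * ((a : ℝ) - ((q : ℝ) - 1))
          ≤ (1 / q) * ((a : ℝ) - ((q : ℝ) - 1)) :=
            mul_le_mul_of_nonneg_right hρq hc.le
        _ ≤ (1 / q) * (((a / q : ℕ) : ℝ) * q) := by
            apply mul_le_mul_of_nonneg_left hdiv
            positivity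
        _ = ((a / q : ℕ) : ℝ) := by
            field_simp
  have hsumA : ρ * ((∑ j, (i j : ℝ)) - ((q : ℝ) - 1) * t) ≤ ∑ j, (((i j) / q : ℕ) : ℝ) := by
    have hsplit : (∑ j : Fin t, ((i j : ℝ) - ((q : ℝ) - 1)))
        = (∑ j, (i j : ℝ)) - ((q : ℝ) - 1) * t := by
      rw [Finset.sum_sub_distrib, Finset.sum_const, Finset.card_univ, Fintype.card_fin,
        nsmul_eq_mul]
      ring
    rw [← hsplit, Finset.mul_sum]
    exact Finset.sum_le_sum (fun j _ => hAbd j)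
  have hsumI : ρ * (α.sum : ℝ) ≤ ((α.map (· / q)).sum : ℝ) :=
    list_sum_bound q I hIpos α hmem
  have hst : ρ * ((n : ℝ) - ((q : ℝ) - 1) * s) ≤ ρ * ((n : ℝ) - ((q : ℝ) - 1) * t) := by
    apply mul_le_mul_of_nonneg_left _ hρ0
    have hq1 : (0:ℝ) ≤ (q : ℝ) - 1 := by
      have : (1:ℝ) ≤ q := by exact_mod_cast hq
      linarith
    have hts' : (t : ℝ) ≤ s := by exact_mod_cast hts
    nlinarith
  refine le_trans hst ?_
  have hncast : (n : ℝ) = (∑ j, (i j : ℝ)) + (α.sum : ℝ) := by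
    rw [hn]; push_cast; ring
  rw [Nat.cast_add, Nat.cast_sum, hncast]
  calc ρ * ((∑ j, (i j : ℝ)) + (α.sum : ℝ) - ((q : ℝ) - 1) * t)
      = ρ * ((∑ j, (i j : ℝ)) - ((q : ℝ) - 1) * t) + ρ * (α.sum : ℝ) := by ring
    _ ≤ (∑ j, (((i j) / q : ℕ) : ℝ)) + ((α.map (· / q)).sum : ℝ) := add_le_add hsumA hsumI
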